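/- arXiv:1410.8362 — 2 statements merged into one kernel-verified Lean document; each statement's English description precedes it below -/
import Mathlib

section
/- The linearly ordered set ([0,1]^{<ω₁}_{↘0}, <_altlex) contains no subset of order type ω₁* (i.e., no strictly decreasing ω₁-sequence). -/
open Ordinal Set

noncomputable section

/-- Parity of an ordinal: `a = γ + n` with `γ` limit, `n < ω`; even iff `n` is even. -/
def OrdEven (a : Ordinal) : Prop := a % 2 = 0

/-- Upper semicontinuity. -/
def USC {X : Type} [TopologicalSpace X] (f : X → ℝ) : Prop :=
  ∀ r : ℝ, IsOpen (f ⁻¹' Set.Iio r)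

/-- The least ordinal where two transfinite sequences differ. -/
def dOrd (f g : Ordinal → ℝ) : Ordinal := sInf {a | f a ≠ g a}

/-- The alternating lexicographical order on transfinite sequences of reals. -/
def AltLex (f g : Ordinal → ℝ) : Prop :=
  f ≠ g ∧ ((OrdEven (dOrd f g) ∧ f (dOrd f g) < g (dOrd f g)) ∨
    (¬ OrdEven (dOrd f g) ∧ g (dOrd f g) < f (dOrd f g)))

/-- `f` encodes a strictly decreasing countable transfinite sequence in `[0,1]`
with last element `0` at index `ξ` (padded with `0` beyond `ξ`). -/
def IsDSeqLen (f : Ordinal → ℝ) (ξ : Ordinal) : Prop :=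
  ξ < (Cardinal.aleph 1).ord ∧ (∀ a, f a ∈ Set.Icc (0:ℝ) 1) ∧
  (∀ a b, a < b → b ≤ ξ → f b < f a) ∧ (∀ a, ξ ≤ a → f a = 0)

/-- Membership in `[0,1]^{<ω₁}_{↘0}`. -/
def IsDSeq (f : Ordinal → ℝ) : Prop := ∃ ξ, IsDSeqLen f ξ

/-! If `F` were such a sequence, each coordinate `a ↦ F a γ` would be eventually constant. This
goes by induction on `γ`, a countable bound on the stages where the earlier coordinates settle
being available because `ω₁` is regular: once the terms agree below `γ`, the alternating order
makes `a ↦ F a γ` monotone, in the direction given by the parity of `γ`, and a monotone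
`ω₁`-sequence of reals is eventually constant. The eventual values form a weakly decreasing
`ω₁`-sequence `r`, so `r γ = r (γ + 1)` for some `γ`. Then every late term vanishes from `γ` on,
so late terms coincide, contradicting strict decrease. -/

lemma Ordinal.countable_Iio_of_lt_omega_one {γ : Ordinal} (hγ : γ < ω₁) :
    (Iio γ).Countable := by
  rw [← Cardinal.le_aleph0_iff_set_countable, Cardinal.mk_Iio_ordinal, Cardinal.lift_le_aleph0,
    ← Order.lt_succ_iff, Cardinal.succ_aleph0, ← Cardinal.lt_omega_iff_card_lt]
  exact hγ

lemma Set.Countable.exists_upperBound_lt_omega_one {s : Set Ordinal} (hs : s.Countable)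
    (h : ∀ a ∈ s, a < ω₁) : ∃ t < ω₁, t ∈ upperBounds s := by
  have := hs.to_subtype
  exact ⟨⨆ a : s, (a : Ordinal), iSup_lt_omega_one fun a => h a a.2,
    fun a ha => Ordinal.le_iSup (fun a : s => (a : Ordinal)) ⟨a, ha⟩⟩

section EventuallyConst

variable {α : Type*} [LinearOrder α] [TopologicalSpace α] [OrderTopology α]
  [SecondCountableTopology α] {g : Ordinal → α} {t₀ : Ordinal}

/- Only countably many `x` have `g x` separated by a gap from all earlier values
(`countable_image_gt_image_Iio_within`); take `t` beyond them. The least `a` with `g a < g t`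
would be such an `x`. -/
theorem AntitoneOn.exists_forall_eq_of_lt_omega_one (ht₀ : t₀ < ω₁)
    (hg : AntitoneOn g (Ico t₀ ω₁)) : ∃ t ∈ Ico t₀ ω₁, ∀ a ∈ Ico t ω₁, g a = g t := by
  obtain ⟨u, hu, hbound⟩ := ((countable_image_gt_image_Iio_within (Ico t₀ ω₁) g).insert
    t₀).exists_upperBound_lt_omega_one (by rintro a (rfl | ha); exacts [ht₀, ha.1.2])
  have ht : Order.succ u ∈ Ico t₀ ω₁ :=
    ⟨(hbound (mem_insert _ _)).trans (Order.le_succ u),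
      (Cardinal.isSuccLimit_omega 1).succ_lt hu⟩
  refine ⟨Order.succ u, ht, fun a ha => ?_⟩
  have ha' : a ∈ Ico t₀ ω₁ := ⟨ht.1.trans ha.1, ha.2⟩
  by_contra hne
  have hdrop : ({x | x ∈ Ico t₀ ω₁ ∧ g x < g (Order.succ u)}).Nonempty :=
    ⟨a, ha', (hg ht ha' ha.1).lt_of_ne hne⟩
  obtain ⟨hm, hmlt⟩ := csInf_mem hdrop
  have hmu : sInf _ ≤ u := hbound (mem_insert_of_mem _
    ⟨hm, _, hmlt, fun y hy hym => not_lt.1 fun h => not_le.2 hym (csInf_le' ⟨hy, h⟩)⟩)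
  exact hmlt.not_ge (hg hm ht (hmu.trans (Order.le_succ u)))

theorem MonotoneOn.exists_forall_eq_of_lt_omega_one (ht₀ : t₀ < ω₁)
    (hg : MonotoneOn g (Ico t₀ ω₁)) : ∃ t ∈ Ico t₀ ω₁, ∀ a ∈ Ico t ω₁, g a = g t :=
  AntitoneOn.exists_forall_eq_of_lt_omega_one (α := αᵒᵈ) ht₀ hg.dual_right

end EventuallyConst

lemma IsDSeqLen.antitone {f : Ordinal → ℝ} {ξ : Ordinal} (hf : IsDSeqLen f ξ) :
    Antitone f := by
  obtain ⟨-, hI, hlt, hzero⟩ := hf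
  intro a b hab
  rcases hab.eq_or_lt with rfl | hab
  · rfl
  rcases le_or_gt b ξ with hb | hb
  · exact (hlt a b hab hb).le
  · exact (hzero b hb.le).trans_le (hI a).1

lemma IsDSeqLen.eq_zero_of_apply_succ_eq {f : Ordinal → ℝ} {ξ γ β : Ordinal}
    (hf : IsDSeqLen f ξ) (h : f (Order.succ γ) = f γ) (hβ : γ ≤ β) : f β = 0 := by
  refine hf.2.2.2 β (le_trans (not_lt.1 fun hγξ => ?_) hβ)
  exact (hf.2.2.1 γ _ (Order.lt_succ γ) (Order.succ_le_of_lt hγξ)).ne h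

lemma dOrd_eq_of_eqOn_Iio {f g : Ordinal → ℝ} {γ : Ordinal} (hfg : EqOn f g (Iio γ))
    (hne : f γ ≠ g γ) : dOrd f g = γ :=
  le_antisymm (csInf_le' hne) (le_csInf ⟨γ, hne⟩ fun _ ha => not_lt.1 fun h => ha (hfg h))

lemma altLex_iff_of_eqOn_Iio {f g : Ordinal → ℝ} {γ : Ordinal} (hfg : EqOn f g (Iio γ))
    (hne : f γ ≠ g γ) :
    AltLex f g ↔ (OrdEven γ ∧ f γ < g γ) ∨ (¬ OrdEven γ ∧ g γ < f γ) := by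
  rw [AltLex, dOrd_eq_of_eqOn_Iio hfg hne]
  exact and_iff_right fun h => hne (congrFun h γ)

def AltLexStrictAnti (F : Ordinal → Ordinal → ℝ) : Prop :=
  ∀ a b, a < b → b < ω₁ → AltLex (F b) (F a)

namespace AltLexStrictAnti

variable {F : Ordinal → Ordinal → ℝ}

lemma exists_forall_apply_eq (hF : AltLexStrictAnti F) {γ t₀ : Ordinal} (ht₀ : t₀ < ω₁)
    (hagree : ∀ a ∈ Ico t₀ ω₁, ∀ b ∈ Ico t₀ ω₁, EqOn (F a) (F b) (Iio γ)) :
    ∃ t ∈ Ico t₀ ω₁, ∀ a ∈ Ico t ω₁, F a γ = F t γ := by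
  have hstep : ∀ a ∈ Ico t₀ ω₁, ∀ b ∈ Ico t₀ ω₁, a < b → F b γ ≠ F a γ →
      (OrdEven γ ∧ F b γ < F a γ) ∨ (¬ OrdEven γ ∧ F a γ < F b γ) :=
    fun a ha b hb hab hne => (altLex_iff_of_eqOn_Iio (hagree b hb a ha) hne).1 (hF a b hab hb.2)
  by_cases hγ : OrdEven γ
  · refine AntitoneOn.exists_forall_eq_of_lt_omega_one ht₀ fun a ha b hb hab => ?_
    rcases hab.eq_or_lt with rfl | hab
    · rfl
    by_cases hne : F b γ = F a γ
    · exact hne.le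
    rcases hstep a ha b hb hab hne with h | h
    exacts [h.2.le, absurd hγ h.1]
  · refine MonotoneOn.exists_forall_eq_of_lt_omega_one ht₀ fun a ha b hb hab => ?_
    rcases hab.eq_or_lt with rfl | hab
    · rfl
    by_cases hne : F b γ = F a γ
    · exact hne.ge
    rcases hstep a ha b hb hab hne with h | h
    exacts [absurd h.1 hγ, h.2.le]

lemma exists_eqOn_Iic (hF : AltLexStrictAnti F) {γ : Ordinal} (hγ : γ < ω₁) :
    ∃ t < ω₁, ∀ a ∈ Ico t ω₁, ∀ b ∈ Ico t ω₁, EqOn (F a) (F b) (Iic γ) := by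
  induction γ using WellFoundedLT.induction with
  | ind γ IH =>
    choose T hT hTeq using fun β (hβ : β ∈ Iio γ) => IH β hβ (hβ.trans hγ)
    have := (countable_Iio_of_lt_omega_one hγ).to_subtype
    obtain ⟨t₀, ht₀, hbound⟩ := (countable_range fun β : Iio γ => T β β.2)
      |>.exists_upperBound_lt_omega_one (forall_mem_range.2 fun β => hT β β.2)
    have hagree : ∀ a ∈ Ico t₀ ω₁, ∀ b ∈ Ico t₀ ω₁, EqOn (F a) (F b) (Iio γ) :=
      fun a ha b hb β hβ =>
        have hTβ : T β hβ ≤ t₀ := hbound ⟨⟨β, hβ⟩, rfl⟩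
        hTeq β hβ a ⟨hTβ.trans ha.1, ha.2⟩ b ⟨hTβ.trans hb.1, hb.2⟩ self_mem_Iic
    obtain ⟨t, ht, hconst⟩ := hF.exists_forall_apply_eq ht₀ hagree
    refine ⟨t, ht.2, fun a ha b hb β hβ => ?_⟩
    rcases (show β ≤ γ from hβ).lt_or_eq with hβ | rfl
    · exact hagree a ⟨ht.1.trans ha.1, ha.2⟩ b ⟨ht.1.trans hb.1, hb.2⟩ hβ
    · exact (hconst a ha).trans (hconst b hb).symm

lemma exists_eventually_eqOn_Iic (hF : AltLexStrictAnti F) :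
    ∃ r : Ordinal → ℝ, ∀ γ < ω₁, ∃ t < ω₁, ∀ a ∈ Ico t ω₁, EqOn (F a) r (Iic γ) := by
  choose! T hT hTeq using fun γ (hγ : γ < ω₁) => hF.exists_eqOn_Iic hγ
  refine ⟨fun β => F (T β) β, fun γ hγ => ⟨T γ, hT γ hγ, fun a ha β hβ => ?_⟩⟩
  have hβ' : β < ω₁ := (show β ≤ γ from hβ).trans_lt hγ
  have hc : max (T γ) (T β) < ω₁ := max_lt (hT γ hγ) (hT β hβ')
  calc F a β = F (max (T γ) (T β)) β := hTeq γ hγ a ha _ ⟨le_max_left _ _, hc⟩ hβ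
    _ = F (T β) β := hTeq β hβ' _ ⟨le_max_right _ _, hc⟩ _ ⟨le_rfl, hT β hβ'⟩ self_mem_Iic

end AltLexStrictAnti

theorem stmt_4 :
    ¬ ∃ F : Ordinal → Ordinal → ℝ,
      (∀ a, a < (Cardinal.aleph 1).ord → IsDSeq (F a)) ∧
      (∀ a b, a < b → b < (Cardinal.aleph 1).ord → AltLex (F b) (F a)) := by
  rintro ⟨F, hseq, hF⟩
  rw [Cardinal.ord_aleph] at hseq hF
  obtain ⟨r, hr⟩ := AltLexStrictAnti.exists_eventually_eqOn_Iic hF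
  have hr_anti : AntitoneOn r (Ico 0 ω₁) := fun γ _ γ' hγ' hle => by
    obtain ⟨t, ht, hFt⟩ := hr γ' hγ'.2
    obtain ⟨ξ, hξ⟩ := hseq t ht
    rw [← hFt t ⟨le_rfl, ht⟩ (show γ ≤ γ' from hle), ← hFt t ⟨le_rfl, ht⟩ self_mem_Iic]
    exact hξ.antitone hle
  obtain ⟨γ, hγ, hconst⟩ := hr_anti.exists_forall_eq_of_lt_omega_one (omega_pos 1)
  have hγ' : Order.succ γ < ω₁ := (Cardinal.isSuccLimit_omega 1).succ_lt hγ.2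
  obtain ⟨t, ht, hFt⟩ := hr (Order.succ γ) hγ'
  have hlate : ∀ a ∈ Ico t ω₁, ∀ β, F a β = if β < γ then r β else 0 := by
    intro a ha β
    obtain ⟨ξ, hξ⟩ := hseq a ha.2
    split_ifs with hβ
    · exact hFt a ha (hβ.le.trans (Order.le_succ γ))
    · refine hξ.eq_zero_of_apply_succ_eq ?_ (not_lt.1 hβ)
      rw [hFt a ha self_mem_Iic, hFt a ha (Order.le_succ γ), hconst _ ⟨Order.le_succ γ, hγ'⟩]
  have hsucc : Order.succ t ∈ Ico t ω₁ :=
    ⟨Order.le_succ t, (Cardinal.isSuccLimit_omega 1).succ_lt ht⟩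
  exact (hF t _ (Order.lt_succ t) hsucc.2).1 <|
    funext fun β => by rw [hlate _ hsucc, hlate t ⟨le_rfl, ht⟩]
end
end

section
/- Let (L_n)_{n<ω} be a countable family of linear orders, each admitting a strictly order-preserving map into ([0,1]^{<ω₁}_{↘0}, <_altlex). Then the lexicographic product ∏_{n<ω} L_n also admits a strictly order-preserving map into ([0,1]^{<ω₁}_{↘0}, <_altlex). -/
open Ordinal Set

noncomputable section

/-!
Concatenate the images of the coordinates of a point of the product in the order of the
coordinates, squeezing the `n`-th one into `[2 / 3 ^ (n + 1), 1 / 3 ^ n]`, an interval lying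
above all later ones. Each block is padded to even length (when the length is odd, the final `0`
becomes the bottom of the interval), so every block starts at an even position and a position
inside block `n` has the parity of its offset there. Hence if two points first differ at
coordinate `n`, their sequences first differ in block `n`, at the offset `δ` where the `n`-th
images first differ, with the same parity and the same comparison; if one image ends at `δ`,
its sequence has already passed on to the next block, below the interval.

The hypothesis and the conclusion use ordinals of two unrelated universes; sequences are moved
between them by matching the countable ordinals with equal `Ordinal.lift`s.
-/

universe u v

namespace Ordinal

theorem mod_two_le_one (a : Ordinal) : a % 2 ≤ 1 :=
  Order.lt_succ_iff.mp (by simpa using mod_lt a two_ne_zero)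

theorem mod_two_eq_zero_or_one (a : Ordinal) : a % 2 = 0 ∨ a % 2 = 1 :=
  Order.le_one_iff.mp (mod_two_le_one a)

theorem add_mod_two_of_mod_two_eq_zero {a : Ordinal} (ha : a % 2 = 0) (b : Ordinal) :
    (a + b) % 2 = b % 2 := by
  rw [← div_add_mod a 2, ha, add_zero, mul_add_mod_self]

theorem lift_mod_two (a : Ordinal.{u}) : lift.{v} a % 2 = lift.{v} (a % 2) := by
  conv_lhs => rw [← div_add_mod a 2]
  rw [lift_add, lift_mul, lift_ofNat, mul_add_mod_self]
  exact mod_eq_of_lt (by simpa using lift_lt.{v}.mpr (mod_lt a two_ne_zero))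

def evenCeil (a : Ordinal) : Ordinal := a + a % 2

theorem le_evenCeil (a : Ordinal) : a ≤ evenCeil a := le_self_add

theorem evenCeil_le_add_one (a : Ordinal) : evenCeil a ≤ a + 1 :=
  add_le_add_right (mod_two_le_one a) a

theorem le_of_lt_evenCeil {a e : Ordinal} (he : e < evenCeil a) : e ≤ a :=
  Order.lt_add_one_iff.mp (he.trans_le (evenCeil_le_add_one a))

theorem evenCeil_mod_two (a : Ordinal) : evenCeil a % 2 = 0 := by
  rw [evenCeil, ← div_add_mod a 2, add_assoc, mul_add_mod_self, mul_add_mod_self]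
  rcases mod_two_eq_zero_or_one a with h | h <;>
    simp [h, mod_eq_of_lt one_lt_two, one_add_one_eq_two]

theorem evenCeil_lt_ord {a : Ordinal} {c : Cardinal} (hc : Cardinal.aleph0 ≤ c) (ha : a < c.ord) :
    evenCeil a < c.ord :=
  (evenCeil_le_add_one a).trans_lt ((Cardinal.isSuccLimit_ord hc).add_one_lt ha)

end Ordinal

section FirstDifference

variable {f g : Ordinal → ℝ}

theorem dOrd_comm (f g : Ordinal → ℝ) : dOrd f g = dOrd g f := by
  simp only [dOrd, ne_comm]

theorem eq_of_lt_dOrd {e : Ordinal} (he : e < dOrd f g) : f e = g e :=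
  not_not.mp (notMem_of_lt_csInf' he)

theorem altLex_of_eqOn_Iio {c : Ordinal} (hlt : ∀ e < c, f e = g e)
    (hc : OrdEven c ∧ f c < g c ∨ ¬ OrdEven c ∧ g c < f c) : AltLex f g := by
  have hne : f c ≠ g c := by rcases hc with ⟨-, h⟩ | ⟨-, h⟩ <;> [exact h.ne; exact h.ne']
  have hd : dOrd f g = c :=
    le_antisymm (csInf_le' hne) (le_csInf ⟨c, hne⟩ fun e he => not_lt.mp fun h => he (hlt e h))
  exact ⟨Function.ne_iff.mpr ⟨c, hne⟩, hd ▸ hc⟩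

end FirstDifference

namespace IsDSeqLen

variable {f g : Ordinal → ℝ} {ξ ζ : Ordinal}

theorem lt_omega_one (hf : IsDSeqLen f ξ) : ξ < ω₁ := Cardinal.ord_aleph 1 ▸ hf.1

theorem nonneg (hf : IsDSeqLen f ξ) (a : Ordinal) : 0 ≤ f a := (hf.2.1 a).1

theorem le_one (hf : IsDSeqLen f ξ) (a : Ordinal) : f a ≤ 1 := (hf.2.1 a).2

theorem pos_of_lt (hf : IsDSeqLen f ξ) {a : Ordinal} (ha : a < ξ) : 0 < f a :=
  hf.2.2.2 ξ le_rfl ▸ hf.2.2.1 a ξ ha le_rfl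

theorem lt_of_pos (hf : IsDSeqLen f ξ) {a : Ordinal} (ha : 0 < f a) : a < ξ :=
  not_le.mp fun h => ha.ne' (hf.2.2.2 a h)

theorem dOrd_le (hf : IsDSeqLen f ξ) (hg : IsDSeqLen g ζ) (hfg : f ≠ g) : dOrd f g ≤ ξ := by
  by_contra! hξ
  have hgξ : g ξ = 0 := (eq_of_lt_dOrd hξ).symm.trans (hf.2.2.2 ξ le_rfl)
  have hζ : ζ ≤ ξ := not_lt.mp fun h => (hg.pos_of_lt h).ne' hgξ
  refine hfg (funext fun a => ?_)
  rcases lt_or_ge a ξ with ha | ha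
  · exact eq_of_lt_dOrd (ha.trans hξ)
  · rw [hf.2.2.2 a ha, hg.2.2.2 a (hζ.trans ha)]

end IsDSeqLen

def blockVal (n : ℕ) (v : ℝ) : ℝ := (2 + v) / 3 ^ (n + 1)

theorem blockVal_strictMono (n : ℕ) : StrictMono (blockVal n) := fun v w h => by
  unfold blockVal; gcongr

theorem blockVal_pos (n : ℕ) {v : ℝ} (hv : 0 ≤ v) : 0 < blockVal n v := by
  unfold blockVal; positivity

theorem blockVal_le_one (n : ℕ) {v : ℝ} (hv : v ≤ 1) : blockVal n v ≤ 1 := by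
  rw [blockVal, div_le_one (by positivity), pow_succ']
  nlinarith [one_le_pow₀ (n := n) (show (1 : ℝ) ≤ 3 by norm_num)]

theorem blockVal_lt_blockVal {m n : ℕ} (hnm : n < m) {v w : ℝ} (hv : v ≤ 1) (hw : 0 ≤ w) :
    blockVal m v < blockVal n w := by
  have hpow : (3 : ℝ) ^ (n + 2) ≤ 3 ^ (m + 1) := pow_le_pow_right₀ (by norm_num) (by omega)
  rw [blockVal, blockVal, div_lt_div_iff₀ (by positivity) (by positivity)]
  calc (2 + v) * 3 ^ (n + 1) ≤ 3 ^ (n + 2) := by rw [pow_succ' 3 (n + 1)]; gcongr; linarith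
    _ ≤ 3 ^ (m + 1) := hpow
    _ < (2 + w) * 3 ^ (m + 1) := by nlinarith [pow_pos (show (0 : ℝ) < 3 by norm_num) (m + 1)]

section Concat

variable {F G : ℕ → Ordinal → ℝ} {x y : ℕ → Ordinal}

def blockStart (x : ℕ → Ordinal) : ℕ → Ordinal
  | 0 => 0
  | n + 1 => blockStart x n + evenCeil (x n)

open Classical in
def concatSeq (F : ℕ → Ordinal → ℝ) (x : ℕ → Ordinal) (a : Ordinal) : ℝ :=
  if h : ∃ n, a < blockStart x (n + 1) then
    blockVal (Nat.find h) (F (Nat.find h) (a - blockStart x (Nat.find h)))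
  else 0

theorem blockStart_mono (x : ℕ → Ordinal) : Monotone (blockStart x) :=
  monotone_nat_of_le_succ fun _ => le_self_add

theorem blockStart_mod_two (x : ℕ → Ordinal) : ∀ n, blockStart x n % 2 = 0
  | 0 => zero_mod 2
  | n + 1 => by
    rw [blockStart, add_mod_two_of_mod_two_eq_zero (blockStart_mod_two x n), evenCeil_mod_two]

theorem blockStart_lt_ord {c : Cardinal} (hc : Cardinal.aleph0 ≤ c) (hx : ∀ n, x n < c.ord) :
    ∀ n, blockStart x n < c.ord
  | 0 => Cardinal.ord_pos.mpr (Cardinal.aleph0_pos.trans_le hc)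
  | n + 1 => isPrincipal_add_ord hc (blockStart_lt_ord hc hx n) (evenCeil_lt_ord hc (hx n))

theorem blockStart_congr {n : ℕ} (hxy : ∀ m < n, x m = y m) :
    blockStart x n = blockStart y n := by
  suffices ∀ k ≤ n, blockStart x k = blockStart y k from this n le_rfl
  intro k hk
  induction k with
  | zero => rfl
  | succ k ih => rw [blockStart, blockStart, ih (by omega), hxy k (by omega)]

theorem exists_blockStart_add {a : Ordinal} {n : ℕ} (ha : a < blockStart x n) :
    ∃ k < n, ∃ e < evenCeil (x k), blockStart x k + e = a := by
  induction n with
  | zero => exact absurd ha zero_le.not_gt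
  | succ n ih =>
    rcases lt_or_ge a (blockStart x n) with h | h
    · obtain ⟨k, hk, rest⟩ := ih h
      exact ⟨k, hk.trans n.lt_succ_self, rest⟩
    · obtain ⟨e, rfl⟩ := exists_add_of_le h
      exact ⟨n, n.lt_succ_self, e, (add_lt_add_iff_left _).mp ha, rfl⟩

theorem concatSeq_blockStart_add {n : ℕ} {e : Ordinal} (he : e < evenCeil (x n)) :
    concatSeq F x (blockStart x n + e) = blockVal n (F n e) := by
  have hn : blockStart x n + e < blockStart x (n + 1) := add_lt_add_right he _
  have hex : ∃ k, blockStart x n + e < blockStart x (k + 1) := ⟨n, hn⟩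
  have hfind : Nat.find hex = n := by
    refine le_antisymm (Nat.find_min' _ hn) (not_lt.mp fun hlt => ?_)
    exact (Nat.find_spec hex).not_ge (le_self_add.trans' (blockStart_mono x hlt))
  rw [concatSeq, dif_pos hex, hfind, Ordinal.add_sub_cancel]

theorem concatSeq_eq_of_lt_blockStart {n : ℕ} (hFG : ∀ m < n, F m = G m)
    (hxy : ∀ m < n, x m = y m) {a : Ordinal} (ha : a < blockStart x n) :
    concatSeq F x a = concatSeq G y a := by
  obtain ⟨k, hk, e, he, rfl⟩ := exists_blockStart_add ha
  rw [concatSeq_blockStart_add he, blockStart_congr fun m hm => hxy m (hm.trans hk),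
    concatSeq_blockStart_add (hxy k hk ▸ he), hFG k hk]

theorem concatSeq_eq_zero {a : Ordinal} (ha : ⨆ n, blockStart x n ≤ a) : concatSeq F x a = 0 :=
  dif_neg fun ⟨n, hn⟩ => hn.not_ge ((le_ciSup (bddAbove_of_small) (n + 1)).trans ha)

variable (hF : ∀ k, IsDSeqLen (F k) (x k))
include hF

theorem concatSeq_lt_blockVal {a : Ordinal} {n : ℕ} (ha : blockStart x (n + 1) ≤ a) {w : ℝ}
    (hw : 0 ≤ w) : concatSeq F x a < blockVal n w := by
  unfold concatSeq
  split_ifs with h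
  · refine blockVal_lt_blockVal (not_le.mp fun hle => ?_) ((hF _).le_one _) hw
    exact (Nat.find_spec h).not_ge ((blockStart_mono x (by omega)).trans ha)
  · exact blockVal_pos n hw

theorem concatSeq_blockStart_add_le {n : ℕ} {e : Ordinal} (he : e ≤ evenCeil (x n)) :
    concatSeq F x (blockStart x n + e) ≤ blockVal n (F n e) := by
  rcases he.lt_or_eq with he | rfl
  · exact (concatSeq_blockStart_add he).le
  · exact (concatSeq_lt_blockVal hF le_rfl ((hF n).nonneg _)).le

theorem concatSeq_lt_of_lt {a b : Ordinal} (hab : a < b) (ha : a < ⨆ n, blockStart x n) :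
    concatSeq F x b < concatSeq F x a := by
  obtain ⟨n, han⟩ := (lt_ciSup_iff' bddAbove_of_small).mp ha
  obtain ⟨k, -, e, he, rfl⟩ := exists_blockStart_add han
  rw [concatSeq_blockStart_add he]
  rcases lt_or_ge b (blockStart x (k + 1)) with hb | hb
  · obtain ⟨e', rfl⟩ := exists_add_of_le (le_self_add.trans hab.le)
    have he' : e' < evenCeil (x k) := (add_lt_add_iff_left _).mp hb
    rw [concatSeq_blockStart_add he']
    exact blockVal_strictMono k
      ((hF k).2.2.1 e e' ((add_lt_add_iff_left _).mp hab) (le_of_lt_evenCeil he'))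
  · exact concatSeq_lt_blockVal hF hb ((hF k).nonneg e)

theorem isDSeqLen_concatSeq : IsDSeqLen (concatSeq F x) (⨆ n, blockStart x n) := by
  refine ⟨?_, fun a => ?_, fun a b hab hb => concatSeq_lt_of_lt hF hab (hab.trans_le hb),
    fun a ha => concatSeq_eq_zero ha⟩
  · have hstart := blockStart_lt_ord (Cardinal.aleph0_le_aleph 1) fun k => (hF k).1
    rw [Cardinal.ord_aleph] at hstart ⊢
    exact iSup_lt_omega_one hstart
  · unfold concatSeq
    split_ifs
    · exact ⟨(blockVal_pos _ ((hF _).nonneg _)).le, blockVal_le_one _ ((hF _).le_one _)⟩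
    · exact ⟨le_rfl, zero_le_one⟩

theorem concatSeq_lt_concatSeq (hG : ∀ k, IsDSeqLen (G k) (y k)) {n : ℕ}
    (hstart : blockStart x n = blockStart y n) {δ : Ordinal} (hδ : δ ≤ x n)
    (hlt : F n δ < G n δ) :
    concatSeq F x (blockStart x n + δ) < concatSeq G y (blockStart x n + δ) := by
  have hδy : δ < evenCeil (y n) :=
    ((hG n).lt_of_pos (((hF n).nonneg δ).trans_lt hlt)).trans_le (le_evenCeil _)
  calc concatSeq F x (blockStart x n + δ) ≤ blockVal n (F n δ) :=
        concatSeq_blockStart_add_le hF (hδ.trans (le_evenCeil _))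
    _ < blockVal n (G n δ) := blockVal_strictMono n hlt
    _ = concatSeq G y (blockStart x n + δ) := by rw [hstart, concatSeq_blockStart_add hδy]

theorem altLex_concatSeq (hG : ∀ k, IsDSeqLen (G k) (y k)) {n : ℕ} (hFG : ∀ m < n, F m = G m)
    (hxy : ∀ m < n, x m = y m) (hn : AltLex (F n) (G n)) :
    AltLex (concatSeq F x) (concatSeq G y) := by
  set δ := dOrd (F n) (G n)
  have hstart : blockStart x n = blockStart y n := blockStart_congr hxy
  have hδx : δ ≤ x n := (hF n).dOrd_le (hG n) hn.1
  have hδy : δ ≤ y n := (dOrd_comm (F n) (G n)).trans_le ((hG n).dOrd_le (hF n) hn.1.symm)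
  have hpar : OrdEven (blockStart x n + δ) ↔ OrdEven δ := by
    rw [OrdEven, OrdEven, add_mod_two_of_mod_two_eq_zero (blockStart_mod_two x n)]
  refine altLex_of_eqOn_Iio (c := blockStart x n + δ) (fun a ha => ?_) ?_
  · rcases lt_or_ge a (blockStart x n) with ha' | ha'
    · exact concatSeq_eq_of_lt_blockStart hFG hxy ha'
    · obtain ⟨e, rfl⟩ := exists_add_of_le ha'
      have he : e < δ := (add_lt_add_iff_left _).mp ha
      rw [concatSeq_blockStart_add (he.trans_le (hδx.trans (le_evenCeil _))), hstart,
        concatSeq_blockStart_add (he.trans_le (hδy.trans (le_evenCeil _))), eq_of_lt_dOrd he]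
  · rw [hpar]
    rcases hn.2 with ⟨heven, hlt⟩ | ⟨hodd, hlt⟩
    · exact Or.inl ⟨heven, concatSeq_lt_concatSeq hF hG hstart hδx hlt⟩
    · refine Or.inr ⟨hodd, ?_⟩
      rw [hstart]
      exact concatSeq_lt_concatSeq hG hF hstart.symm hδy hlt

end Concat

section Relift

theorem ordEven_lift_iff (a : Ordinal.{u}) : OrdEven (lift.{v} a) ↔ OrdEven a := by
  rw [OrdEven, OrdEven, lift_mod_two, ← lift_zero.{u, v}, lift_inj]

theorem exists_lift_eq_of_lt_omega_one {a : Ordinal.{u}} (ha : a < ω₁) :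
    ∃ b : Ordinal.{v}, lift.{u} b = lift.{v} a :=
  mem_range_lift_of_le ((lift_lt_omega_one.mpr ha).le.trans (omega_one_eq_lift.mpr rfl).le)

open Classical in
def relift (f : Ordinal.{u} → ℝ) (a : Ordinal.{v}) : ℝ :=
  if h : ∃ b : Ordinal.{u}, lift.{v} b = lift.{u} a then f h.choose else 0

variable {f g : Ordinal.{u} → ℝ} {ξ ζ : Ordinal.{u}}

theorem relift_apply {a : Ordinal.{v}} {b : Ordinal.{u}} (hb : lift.{v} b = lift.{u} a) :
    relift f a = f b := by
  have h : ∃ b : Ordinal.{u}, lift.{v} b = lift.{u} a := ⟨b, hb⟩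
  rw [relift, dif_pos h, lift_inj.mp (h.choose_spec.trans hb.symm)]

theorem IsDSeqLen.relift (hf : IsDSeqLen f ξ) {ξ' : Ordinal.{v}}
    (hξ : lift.{v} ξ = lift.{u} ξ') : IsDSeqLen (relift f) ξ' := by
  refine ⟨?_, fun a => ?_, fun a b hab hb => ?_, fun a ha => ?_⟩
  · rw [Cardinal.ord_aleph, ← lift_lt_omega_one.{v, u}, ← hξ, lift_lt_omega_one]
    exact hf.lt_omega_one
  · unfold _root_.relift
    split_ifs
    exacts [hf.2.1 _, ⟨le_rfl, zero_le_one⟩]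
  · have hbξ : lift.{u} b ≤ lift.{v} ξ := hξ ▸ lift_le.mpr hb
    obtain ⟨b', hb'⟩ := mem_range_lift_of_le hbξ
    obtain ⟨a', ha'⟩ := mem_range_lift_of_le ((lift_lt.{u}.mpr hab).le.trans hbξ)
    rw [relift_apply ha', relift_apply hb']
    exact hf.2.2.1 a' b' (lift_lt.mp (by rw [ha', hb']; exact lift_lt.mpr hab))
      (lift_le.mp (by rw [hb', hξ]; exact lift_le.mpr hb))
  · unfold _root_.relift
    split_ifs with h
    · exact hf.2.2.2 _ (lift_le.mp (by rw [h.choose_spec, hξ]; exact lift_le.mpr ha))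
    · rfl

theorem AltLex.relift (hf : IsDSeqLen f ξ) (hg : IsDSeqLen g ζ) (hfg : AltLex f g) :
    AltLex (relift.{u, v} f) (relift.{u, v} g) := by
  set δ := dOrd f g
  obtain ⟨δ', hδ'⟩ := exists_lift_eq_of_lt_omega_one.{u, v}
    ((hf.dOrd_le hg hfg.1).trans_lt hf.lt_omega_one)
  refine altLex_of_eqOn_Iio (c := δ') (fun e he => ?_) ?_
  · have he' : lift.{u} e ≤ lift.{v} δ := hδ' ▸ (lift_lt.mpr he).le
    obtain ⟨e', he'⟩ := mem_range_lift_of_le he'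
    have hlt : e' < δ := lift_lt.mp (by rw [he', ← hδ']; exact lift_lt.mpr he)
    rw [relift_apply he', relift_apply he', eq_of_lt_dOrd hlt]
  · rw [relift_apply hδ'.symm, relift_apply hδ'.symm, ← ordEven_lift_iff.{v, u} δ', hδ',
      ordEven_lift_iff]
    exact hfg.2

end Relift

def EmbedsInAltLex (L : Type*) [LT L] : Prop :=
  ∃ Ψ : L → Ordinal.{u} → ℝ, (∀ p, IsDSeq (Ψ p)) ∧ ∀ p q : L, p < q → AltLex (Ψ p) (Ψ q)

theorem EmbedsInAltLex.relift {L : Type*} [LT L] (hL : EmbedsInAltLex.{u} L) :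
    EmbedsInAltLex.{v} L := by
  obtain ⟨Ψ, hΨ, hmono⟩ := hL
  choose len hlen using hΨ
  refine ⟨fun p => _root_.relift (Ψ p), fun p => ?_,
    fun p q hpq => (hmono p q hpq).relift (hlen p) (hlen q)⟩
  obtain ⟨ξ', hξ'⟩ := exists_lift_eq_of_lt_omega_one.{u, v} (hlen p).lt_omega_one
  exact ⟨ξ', (hlen p).relift hξ'.symm⟩

theorem EmbedsInAltLex.piLex {L : ℕ → Type*} [∀ n, LT (L n)]
    (hL : ∀ n, EmbedsInAltLex.{u} (L n)) : EmbedsInAltLex.{u} (Lex (∀ n, L n)) := by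
  choose Ψ hΨ hmono using hL
  choose len hlen using hΨ
  refine ⟨fun x => concatSeq (fun k => Ψ k (ofLex x k)) (fun k => len k (ofLex x k)),
    fun x => ⟨_, isDSeqLen_concatSeq fun k => hlen k _⟩, ?_⟩
  rintro x y ⟨n, hxy, hn⟩
  exact altLex_concatSeq (fun k => hlen k _) (fun k => hlen k _)
    (fun m hm => congrArg (Ψ m) (hxy m hm)) (fun m hm => congrArg (len m) (hxy m hm))
    (hmono n _ _ hn)

theorem stmt_15 (L : ℕ → Type) [∀ n, LinearOrder (L n)]
    (h : ∀ n, ∃ Ψ : L n → Ordinal → ℝ, (∀ p, IsDSeq (Ψ p)) ∧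
      ∀ p q : L n, p < q → AltLex (Ψ p) (Ψ q)) :
    ∃ Φ : (∀ n, L n) → Ordinal → ℝ, (∀ x, IsDSeq (Φ x)) ∧
      ∀ (x y : ∀ n, L n) (n : ℕ), (∀ m, m < n → x m = y m) → x n < y n →
        AltLex (Φ x) (Φ y) := by
  obtain ⟨Φ, hΦ, hmono⟩ := (EmbedsInAltLex.piLex h).relift
  exact ⟨fun x => Φ (toLex x), fun x => hΦ _, fun x y n hxy hn => hmono _ _ ⟨n, hxy, hn⟩⟩
end
end
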